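/- Let p be a positive integer, S ⊆ {1,…,p}, and let L : ℝ^p → ℝ be twice continuously differentiable. Let ρ : ℝ → ℝ be μ-amenable for some μ ≥ 0 and λ > 0, set q(t) := λ|t| − ρ(t) and ∇q(β) := (q'(β_j))_{j=1}^p. Let β*, β̂ ∈ ℝ^p with supp(β*) ⊆ S and supp(β̂) ⊆ S, and suppose ∇L(β̂) − ∇q(β̂) + λẑ = 0 for some ẑ ∈ ℝ^p with ẑ_S ∈ ∂‖β̂_S‖₁. Define the matrix Q̂ := ∫₀¹ ∇²L(β* + t(β̂ − β*)) dt and suppose the submatrix Q̂_{SS} (rows and columns indexed by S) is invertible. Then ‖β̂ − β*‖_∞ ≤ ‖(Q̂_{SS})^{−1}(∇L(β*))_S‖_∞ + λ·|||(Q̂_{SS})^{−1}|||_∞. -/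

import Mathlib

open scoped BigOperators

/-- A function `ρ : ℝ → ℝ` is `μ`-amenable (with selection parameter `lam > 0`):
(i) symmetric around zero with `ρ 0 = 0`; (ii) nondecreasing on `[0, ∞)`;
(iii) `t ↦ ρ t / t` nonincreasing on `(0, ∞)`; (iv) differentiable away from `0`;
(v) `t ↦ ρ t + μ/2 t²` convex; (vi) `ρ'(t) → lam` as `t → 0⁺`. -/
structure Amenable (lam mu : ℝ) (ρ : ℝ → ℝ) : Prop where
  symm : ∀ t : ℝ, ρ (-t) = ρ t
  zero : ρ 0 = 0
  mono : MonotoneOn ρ (Set.Ici (0 : ℝ))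
  ratio : AntitoneOn (fun t => ρ t / t) (Set.Ioi (0 : ℝ))
  diff : ∀ t : ℝ, t ≠ 0 → DifferentiableAt ℝ ρ t
  conv : ConvexOn ℝ Set.univ (fun t => ρ t + mu / 2 * t ^ 2)
  deriv_lim : Filter.Tendsto (deriv ρ) (nhdsWithin 0 (Set.Ioi 0)) (nhds lam)


open scoped RealInnerProductSpace

/-- The ℓ₁-norm on `ℝ^p`. -/
noncomputable def norm1 {p : ℕ} (x : EuclideanSpace ℝ (Fin p)) : ℝ := ∑ j, |x j|

/-- The ℓ_∞-norm on `ℝ^p`. -/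
noncomputable def normInf {p : ℕ} (x : EuclideanSpace ℝ (Fin p)) : ℝ := ⨆ j, |x j|

/-- The subdifferential of the ℓ₁-norm at `x`: vectors `v` with `‖v‖_∞ ≤ 1` and
`⟨v, x⟩ = ‖x‖₁`. -/
def l1Subdiff {m : Type*} [Fintype m] (x : m → ℝ) : Set (m → ℝ) :=
  {v | (∀ j, |v j| ≤ 1) ∧ ∑ j, v j * x j = ∑ j, |x j|}

/-- The `(α, τ)`-RSC condition for a loss `L` with parameters `α₁, α₂, τ₁, τ₂` (and `n`, `p`). -/
def RSCCond (p n : ℕ) (α₁ α₂ τ₁ τ₂ : ℝ) (L : EuclideanSpace ℝ (Fin p) → ℝ) : Prop :=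
  ∀ β Δ : EuclideanSpace ℝ (Fin p),
    (‖Δ‖ ≤ 1 → α₁ * ‖Δ‖ ^ 2 - τ₁ * (Real.log p / n) * (norm1 Δ) ^ 2 ≤
      ⟪gradient L (β + Δ) - gradient L β, Δ⟫) ∧
    (1 ≤ ‖Δ‖ → α₂ * ‖Δ‖ - τ₂ * Real.sqrt (Real.log p / n) * norm1 Δ ≤
      ⟪gradient L (β + Δ) - gradient L β, Δ⟫)

/-- The derivative of `q(t) = λ|t| − ρ(t)`. -/
noncomputable def qDeriv (lam : ℝ) (ρ : ℝ → ℝ) (t : ℝ) : ℝ :=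
  deriv (fun u => lam * |u| - ρ u) t

/-- `βt` is a stationary point of the program `min_{‖β‖₁ ≤ R} L β + Σⱼ ρ(βⱼ)`:
`‖βt‖₁ ≤ R` and there is `z ∈ ∂‖βt‖₁` with
`⟨∇L(βt) − ∇q(βt) + λ z, β − βt⟩ ≥ 0` for all feasible `β`. -/
def IsStationaryPt {p : ℕ} (L : EuclideanSpace ℝ (Fin p) → ℝ) (ρ : ℝ → ℝ) (lam R : ℝ)
    (βt : EuclideanSpace ℝ (Fin p)) : Prop :=
  norm1 βt ≤ R ∧ ∃ z : Fin p → ℝ, z ∈ l1Subdiff (fun j => βt j) ∧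
    ∀ β : EuclideanSpace ℝ (Fin p), norm1 β ≤ R →
      0 ≤ ∑ j, (gradient L βt j - qDeriv lam ρ (βt j) + lam * z j) * (β j - βt j)

/-- The Hessian matrix `∇²L(β)` of `L` at `β`. -/
noncomputable def hess {p : ℕ} (L : EuclideanSpace ℝ (Fin p) → ℝ)
    (β : EuclideanSpace ℝ (Fin p)) : Matrix (Fin p) (Fin p) ℝ :=
  fun i j => iteratedFDeriv ℝ 2 L β ![EuclideanSpace.single i 1, EuclideanSpace.single j 1]

/-- The averaged Hessian `Q̂ = ∫₀¹ ∇²L(β* + t(β̂ − β*)) dt`. -/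
noncomputable def Qhat {p : ℕ} (L : EuclideanSpace ℝ (Fin p) → ℝ)
    (βstar βhat : EuclideanSpace ℝ (Fin p)) : Matrix (Fin p) (Fin p) ℝ :=
  fun i j => ∫ t in (0 : ℝ)..1, hess L (βstar + t • (βhat - βstar)) i j

/-- The submatrix `M_{SS}` with rows and columns indexed by `S`. -/
def subSS {p : ℕ} (M : Matrix (Fin p) (Fin p) ℝ) (S : Finset (Fin p)) :
    Matrix {j // j ∈ S} {j // j ∈ S} ℝ :=
  fun i j => M i j

/-- The vector ℓ_∞-norm of a finitely indexed family. -/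
noncomputable def vecInf {m : Type*} [Fintype m] (x : m → ℝ) : ℝ := ⨆ i, |x i|

/-- The ℓ_∞-operator norm of a matrix: the maximum absolute row sum. -/
noncomputable def matInf {m n : Type*} [Fintype m] [Fintype n] (M : Matrix m n ℝ) : ℝ :=
  ⨆ i, ∑ j, |M i j|

/-! On `S` the zero-subgradient condition reads `∇L(β̂)_S = w` with `w_j = q'(β̂_j) − λ ẑ_j`, and
amenability (`0 ≤ ρ' ≤ λ` on `(0, ∞)`, `ρ'` odd, `ρ` even) gives `|w_j| ≤ λ`. The integral form of the
mean value theorem gives `∇L(β̂) − ∇L(β*) = Q̂ (β̂ − β*)`; as `β̂ − β*` is supported on `S`, this is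
`Q̂_{SS} (β̂ − β*)_S = w − ∇L(β*)_S`. Inverting `Q̂_{SS}` and bounding `(Q̂_{SS})⁻¹ w` row by row gives
the claim on `S`, and off `S` the difference vanishes. -/

open Matrix

namespace Amenable

variable {lam mu : ℝ} {ρ : ℝ → ℝ}

theorem continuous (hρ : Amenable lam mu ρ) : Continuous ρ := by
  have hconv : Continuous fun t : ℝ => ρ t + mu / 2 * t ^ 2 :=
    continuousOn_univ.1 (hρ.conv.continuousOn isOpen_univ)
  exact (hconv.sub (show Continuous fun t : ℝ => mu / 2 * t ^ 2 by fun_prop)).congr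
    fun t => by simp

theorem deriv_neg (hρ : Amenable lam mu ρ) (t : ℝ) : deriv ρ (-t) = -deriv ρ t := by
  have h := deriv_comp_neg (f := ρ) (x := -t)
  simp only [hρ.symm, neg_neg] at h
  linarith

theorem deriv_nonneg (hρ : Amenable lam mu ρ) {t : ℝ} (ht : 0 < t) : 0 ≤ deriv ρ t := by
  rw [← derivWithin_of_mem_nhds (Ici_mem_nhds ht)]
  exact hρ.mono.derivWithin_nonneg

theorem deriv_le_div (hρ : Amenable lam mu ρ) {t : ℝ} (ht : 0 < t) : deriv ρ t ≤ ρ t / t := by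
  have hderiv : HasDerivAt (fun s => ρ s / s) ((deriv ρ t * t - ρ t * 1) / t ^ 2) t :=
    (hρ.diff t ht.ne').hasDerivAt.div (hasDerivAt_id t) ht.ne'
  have hnonpos : (deriv ρ t * t - ρ t * 1) / t ^ 2 ≤ 0 := by
    rw [← hderiv.deriv, ← derivWithin_of_mem_nhds (Ioi_mem_nhds ht)]
    exact hρ.ratio.derivWithin_nonpos
  rw [div_le_iff₀ (by positivity), zero_mul] at hnonpos
  rw [le_div_iff₀ ht]
  linarith

theorem div_le (hρ : Amenable lam mu ρ) {t : ℝ} (ht : 0 < t) : ρ t / t ≤ lam := by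
  -- Mean value theorem on `[0, s]` for arbitrarily small `s ≤ t`, then `ρ'(0⁺) = lam`.
  refine ge_of_tendsto_of_frequently hρ.deriv_lim fun hev => ?_
  obtain ⟨ε, hε, hsub⟩ := mem_nhdsGT_iff_exists_Ioo_subset.1 hev
  set s := min t (ε / 2)
  have hs : 0 < s := lt_min ht (half_pos hε)
  obtain ⟨c, hc, hslope⟩ := exists_deriv_eq_slope ρ hs hρ.continuous.continuousOn
    fun x hx => (hρ.diff x hx.1.ne').differentiableWithinAt
  refine hsub ⟨hc.1, hc.2.trans_le ((min_le_right _ _).trans (half_le_self hε.le))⟩ ?_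
  show ρ t / t ≤ deriv ρ c
  rw [hslope, hρ.zero, sub_zero, sub_zero]
  exact hρ.ratio hs ht (min_le_left _ _)

theorem lam_nonneg (hρ : Amenable lam mu ρ) : 0 ≤ lam :=
  ge_of_tendsto hρ.deriv_lim (eventually_nhdsWithin_of_forall fun _ ht => hρ.deriv_nonneg ht)

theorem abs_deriv_le (hρ : Amenable lam mu ρ) {t : ℝ} (ht : t ≠ 0) : |deriv ρ t| ≤ lam := by
  have hpos {s : ℝ} (hs : 0 < s) : |deriv ρ s| ≤ lam := by
    rw [abs_of_nonneg (hρ.deriv_nonneg hs)]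
    exact (hρ.deriv_le_div hs).trans (hρ.div_le hs)
  rcases ht.lt_or_gt with hneg | hpos'
  · simpa [hρ.deriv_neg, abs_neg] using hpos (neg_pos.2 hneg)
  · exact hpos hpos'

end Amenable

theorem qDeriv_of_ne_zero {lam t : ℝ} {ρ : ℝ → ℝ} (hρ : DifferentiableAt ℝ ρ t) (ht : t ≠ 0) :
    qDeriv lam ρ t = lam * SignType.sign t - deriv ρ t :=
  (((hasDerivAt_abs ht).const_mul lam).sub hρ.hasDerivAt).deriv

theorem qDeriv_zero_of_even {lam : ℝ} {ρ : ℝ → ℝ} (hρ : ∀ t, ρ (-t) = ρ t) : qDeriv lam ρ 0 = 0 := by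
  have h := deriv_comp_neg (f := fun u => lam * |u| - ρ u) (x := 0)
  simp only [abs_neg, hρ, neg_zero] at h
  rw [qDeriv]
  linarith

theorem eq_sign_of_mul_eq_abs {z t : ℝ} (hzt : z * t = |t|) (ht : t ≠ 0) :
    z = SignType.sign t :=
  mul_right_cancel₀ ht (hzt.trans (sign_mul_self t).symm)

theorem Amenable.abs_qDeriv_sub_le {lam mu : ℝ} {ρ : ℝ → ℝ} (hρ : Amenable lam mu ρ) {t z : ℝ}
    (hz : |z| ≤ 1) (hzt : z * t = |t|) : |qDeriv lam ρ t - lam * z| ≤ lam := by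
  rcases eq_or_ne t 0 with rfl | ht
  · rw [qDeriv_zero_of_even hρ.symm, zero_sub, abs_neg, abs_mul, abs_of_nonneg hρ.lam_nonneg]
    exact mul_le_of_le_one_right hρ.lam_nonneg hz
  · rw [qDeriv_of_ne_zero (hρ.diff t ht) ht, eq_sign_of_mul_eq_abs hzt ht, sub_sub_cancel_left,
      abs_neg]
    exact hρ.abs_deriv_le ht

theorem mul_eq_abs_of_mem_l1Subdiff {m : Type*} [Fintype m] {x v : m → ℝ} (hv : v ∈ l1Subdiff x)
    (j : m) : v j * x j = |x j| := by
  have hle (i : m) : v i * x i ≤ |x i| :=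
    calc v i * x i ≤ |v i| * |x i| := (le_abs_self _).trans (abs_mul _ _).le
      _ ≤ |x i| := mul_le_of_le_one_left (abs_nonneg _) (hv.1 i)
  exact (Finset.sum_eq_sum_iff_of_le fun i _ => hle i).1 hv.2 j (Finset.mem_univ j)

theorem gradient_apply_eq_fderiv_single {ι : Type*} [Fintype ι] [DecidableEq ι]
    (L : EuclideanSpace ℝ ι → ℝ) (x : EuclideanSpace ℝ ι) (i : ι) :
    gradient L x i = fderiv ℝ L x (EuclideanSpace.single i 1) := by
  have h := InnerProductSpace.toDual_symm_apply (x := EuclideanSpace.single i (1 : ℝ))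
    (y := fderiv ℝ L x)
  rw [EuclideanSpace.inner_single_right] at h
  simpa [gradient] using h

section Hessian

variable {p : ℕ} {L : EuclideanSpace ℝ (Fin p) → ℝ}

theorem hess_apply_eq_fderiv_fderiv (β : EuclideanSpace ℝ (Fin p)) (i j : Fin p) :
    hess L β i j =
      fderiv ℝ (fderiv ℝ L) β (EuclideanSpace.single i 1) (EuclideanSpace.single j 1) := by
  simp [hess, iteratedFDeriv_two_apply]

theorem continuous_hess_apply (hL : ContDiff ℝ 2 L) (i j : Fin p) :
    Continuous fun β => hess L β i j := by
  simp only [hess_apply_eq_fderiv_fderiv]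
  have hcont := (hL.fderiv_right le_rfl).continuous_fderiv one_ne_zero
  exact (hcont.clm_apply continuous_const).clm_apply continuous_const

theorem hasDerivAt_gradient_apply_add_smul (hL : ContDiff ℝ 2 L) (a Δ : EuclideanSpace ℝ (Fin p))
    (i : Fin p) (t : ℝ) :
    HasDerivAt (fun s : ℝ => gradient L (a + s • Δ) i) ((hess L (a + t • Δ) *ᵥ Δ.ofLp) i) t := by
  have hline : HasDerivAt (fun s : ℝ => a + s • Δ) Δ t := by
    simpa using ((hasDerivAt_id t).smul_const Δ).const_add a
  have hL' : ContDiff ℝ 1 (fderiv ℝ L) := hL.fderiv_right le_rfl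
  have hfderiv : HasFDerivAt (fderiv ℝ L) (fderiv ℝ (fderiv ℝ L) (a + t • Δ)) (a + t • Δ) :=
    (hL'.differentiable one_ne_zero _).hasFDerivAt
  have hchain : HasDerivAt (fun s : ℝ => fderiv ℝ L (a + s • Δ) (EuclideanSpace.single i 1))
      (fderiv ℝ (fderiv ℝ L) (a + t • Δ) Δ (EuclideanSpace.single i 1)) t := by
    have hcomp : HasDerivAt (fun s : ℝ => fderiv ℝ L (a + s • Δ))
        (fderiv ℝ (fderiv ℝ L) (a + t • Δ) Δ) t := hfderiv.comp_hasDerivAt t hline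
    simpa using hcomp.clm_apply (hasDerivAt_const t (EuclideanSpace.single i 1))
  simp only [gradient_apply_eq_fderiv_single]
  convert hchain using 1
  -- symmetry of the second derivative turns `D²L Δ eᵢ` into row `i` of the Hessian applied to `Δ`
  rw [(hL.contDiffAt.isSymmSndFDerivAt (by simp)) Δ]
  simp only [Matrix.mulVec, dotProduct, hess_apply_eq_fderiv_fderiv]
  generalize fderiv ℝ (fderiv ℝ L) (a + t • Δ) (EuclideanSpace.single i 1) = B
  conv_rhs => rw [← (EuclideanSpace.basisFun (Fin p) ℝ).sum_repr Δ]
  simp [mul_comm]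

theorem gradient_sub_gradient_eq_Qhat_mulVec (hL : ContDiff ℝ 2 L) (a b : EuclideanSpace ℝ (Fin p))
    (i : Fin p) : gradient L b i - gradient L a i = (Qhat L a b *ᵥ (b - a).ofLp) i := by
  have hcont (j : Fin p) : Continuous fun t : ℝ => hess L (a + t • (b - a)) i j :=
    (continuous_hess_apply hL i j).comp (by fun_prop)
  have hrow : Continuous fun t : ℝ => (hess L (a + t • (b - a)) *ᵥ (b - a).ofLp) i :=
    continuous_finsetSum Finset.univ fun j _ => (hcont j).fun_mul continuous_const
  have hFTC := intervalIntegral.integral_eq_sub_of_hasDerivAt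
    (fun t _ => hasDerivAt_gradient_apply_add_smul hL a (b - a) i t) (hrow.intervalIntegrable 0 1)
  simp only [one_smul, zero_smul, add_zero, add_sub_cancel] at hFTC
  simp only [← hFTC, Matrix.mulVec, dotProduct]
  rw [intervalIntegral.integral_finsetSum fun j _ =>
      ((hcont j).fun_mul continuous_const).intervalIntegrable 0 1]
  simp only [Qhat, intervalIntegral.integral_mul_const]

end Hessian

section SupNorms

variable {m n : Type*} [Fintype m] [Fintype n]

theorem abs_le_vecInf (x : m → ℝ) (i : m) : |x i| ≤ vecInf x :=
  le_ciSup (f := fun i => |x i|) (Set.finite_range _).bddAbove i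

theorem vecInf_nonneg (x : m → ℝ) : 0 ≤ vecInf x :=
  Real.iSup_nonneg fun _ => abs_nonneg _

theorem sum_abs_le_matInf (M : Matrix m n ℝ) (i : m) : ∑ j, |M i j| ≤ matInf M :=
  le_ciSup (f := fun i => ∑ j, |M i j|) (Set.finite_range _).bddAbove i

theorem matInf_nonneg (M : Matrix m n ℝ) : 0 ≤ matInf M :=
  Real.iSup_nonneg fun _ => Finset.sum_nonneg fun _ _ => abs_nonneg _

theorem abs_mulVec_le_matInf_mul (M : Matrix m n ℝ) {w : n → ℝ} {c : ℝ} (hw : ∀ j, |w j| ≤ c)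
    (hc : 0 ≤ c) (i : m) : |(M *ᵥ w) i| ≤ matInf M * c :=
  calc |(M *ᵥ w) i| ≤ ∑ j, |M i j| * |w j| := by
        simpa only [Matrix.mulVec, dotProduct, abs_mul] using
          Finset.abs_sum_le_sum_abs (fun j => M i j * w j) Finset.univ
    _ ≤ ∑ j, |M i j| * c := by gcongr with j; exact hw j
    _ = (∑ j, |M i j|) * c := Finset.sum_mul _ _ _ |>.symm
    _ ≤ matInf M * c := by gcongr; exact sum_abs_le_matInf M i

theorem normInf_le {p : ℕ} {x : EuclideanSpace ℝ (Fin p)} {c : ℝ} (hx : ∀ j, |x j| ≤ c)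
    (hc : 0 ≤ c) : normInf x ≤ c :=
  Real.iSup_le hx hc

end SupNorms

theorem subSS_mulVec_of_support_subset {p : ℕ} (M : Matrix (Fin p) (Fin p) ℝ) {S : Finset (Fin p)}
    {x : Fin p → ℝ} (hx : ∀ j ∉ S, x j = 0) (i : S) :
    (subSS M S *ᵥ fun j : S => x j) i = (M *ᵥ x) i := by
  simp only [Matrix.mulVec, dotProduct, subSS]
  rw [Finset.sum_coe_sort S fun j => M i j * x j]
  exact Finset.sum_subset (Finset.subset_univ S) fun j _ hj => by rw [hx j hj, mul_zero]

theorem ell_inf_bound_general (p : ℕ) (S : Finset (Fin p))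
    (L : EuclideanSpace ℝ (Fin p) → ℝ) (hL : ContDiff ℝ 2 L)
    (ρ : ℝ → ℝ) (lam mu : ℝ) (hρ : Amenable lam mu ρ)
    (βstar βhat : EuclideanSpace ℝ (Fin p))
    (hβstarS : ∀ j, βstar j ≠ 0 → j ∈ S) (hβhatS : ∀ j, βhat j ≠ 0 → j ∈ S)
    (zhat : Fin p → ℝ)
    (hzero : ∀ j, gradient L βhat j - qDeriv lam ρ (βhat j) + lam * zhat j = 0)
    (hzS : (fun j : {j // j ∈ S} => zhat j) ∈ l1Subdiff (fun j : {j // j ∈ S} => βhat j))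
    (hinv : IsUnit (subSS (Qhat L βstar βhat) S).det) :
    normInf (βhat - βstar) ≤
      vecInf ((subSS (Qhat L βstar βhat) S)⁻¹.mulVec
          (fun j : {j // j ∈ S} => gradient L βstar j)) +
        lam * matInf (subSS (Qhat L βstar βhat) S)⁻¹ := by
  set A := subSS (Qhat L βstar βhat) S
  set g : S → ℝ := fun j => gradient L βstar j
  set w : S → ℝ := fun j => qDeriv lam ρ (βhat j) - lam * zhat j
  have hw (j : S) : |w j| ≤ lam :=
    hρ.abs_qDeriv_sub_le (hzS.1 j) (mul_eq_abs_of_mem_l1Subdiff hzS j)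
  have hΔS (j : Fin p) (hj : j ∉ S) : (βhat - βstar) j = 0 := by
    simp [not_imp_comm.1 (hβhatS j) hj, not_imp_comm.1 (hβstarS j) hj]
  have hAΔ : A *ᵥ (fun j : S => (βhat - βstar) j) = w - g := by
    funext i
    rw [subSS_mulVec_of_support_subset _ hΔS, ← gradient_sub_gradient_eq_Qhat_mulVec hL]
    simp only [Pi.sub_apply, w, g]
    linarith [hzero i]
  have hΔ : (fun j : S => (βhat - βstar) j) = A⁻¹ *ᵥ w - A⁻¹ *ᵥ g := by
    rw [← Matrix.mulVec_sub, ← hAΔ, Matrix.mulVec_mulVec, Matrix.nonsing_inv_mul A hinv,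
      Matrix.one_mulVec]
  have hbound_nonneg : 0 ≤ vecInf (A⁻¹ *ᵥ g) + lam * matInf A⁻¹ :=
    add_nonneg (vecInf_nonneg _) (mul_nonneg hρ.lam_nonneg (matInf_nonneg _))
  refine normInf_le (fun j => ?_) hbound_nonneg
  by_cases hj : j ∈ S
  · have hj' := congrFun hΔ ⟨j, hj⟩
    simp only [Pi.sub_apply] at hj'
    rw [hj', sub_eq_neg_add]
    refine (abs_add_le _ _).trans ?_
    rw [abs_neg, mul_comm lam]
    exact add_le_add (abs_le_vecInf _ _) (abs_mulVec_le_matInf_mul _ hw hρ.lam_nonneg _)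
  · rw [hΔS j hj, abs_zero]
    exact hbound_nonneg

/-- ℓ_∞-bound on `β̂ − β*` via the averaged Hessian.  If `β*, β̂` are supported
on `S`, the zero-subgradient condition holds at `β̂`, and `Q̂_{SS}` is invertible, then
`‖β̂ − β*‖_∞ ≤ ‖(Q̂_{SS})⁻¹ (∇L(β*))_S‖_∞ + λ |||(Q̂_{SS})⁻¹|||_∞`. -/
theorem ell_inf_bound (p : ℕ) (hp : 0 < p) (S : Finset (Fin p))
    (L : EuclideanSpace ℝ (Fin p) → ℝ) (hL : ContDiff ℝ 2 L)
    (ρ : ℝ → ℝ) (lam mu : ℝ) (hlam : 0 < lam) (hmu : 0 ≤ mu) (hρ : Amenable lam mu ρ)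
    (βstar βhat : EuclideanSpace ℝ (Fin p))
    (hβstarS : ∀ j, βstar j ≠ 0 → j ∈ S) (hβhatS : ∀ j, βhat j ≠ 0 → j ∈ S)
    (zhat : Fin p → ℝ)
    (hzero : ∀ j, gradient L βhat j - qDeriv lam ρ (βhat j) + lam * zhat j = 0)
    (hzS : (fun j : {j // j ∈ S} => zhat j) ∈ l1Subdiff (fun j : {j // j ∈ S} => βhat j))
    (hinv : IsUnit (subSS (Qhat L βstar βhat) S).det) :
    normInf (βhat - βstar) ≤
      vecInf ((subSS (Qhat L βstar βhat) S)⁻¹.mulVec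
          (fun j : {j // j ∈ S} => gradient L βstar j)) +
        lam * matInf (subSS (Qhat L βstar βhat) S)⁻¹ :=
  ell_inf_bound_general p S L hL ρ lam mu hρ βstar βhat hβstarS hβhatS zhat hzero hzS hinv
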